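/- For distinct integers j ≠ m, the second derivative of the Sinc function S_m at the node x_j = jΔx equals 2(−1)^{j−m+1} / (Δx² (j−m)²). -/

import Mathlib

open Real Filter Topology

/-!
Near the node `j * Δx` the function `S` is `sinc (c * (x - m * Δx))` with `c = π / Δx`, so its
second derivative there is `c ^ 2` times that of `sinc` at `(j - m) * π`. Away from `0`,
`sinc t = sin t / t` has second derivative `-sin t / t - 2 cos t / t ^ 2 + 2 sin t / t ^ 3`,
and at a nonzero multiple `k * π` only the middle term survives: `-2 (-1) ^ k / (k * π) ^ 2`.
-/

section CompMulSub

variable {𝕜 : Type*} [NontriviallyNormedField 𝕜]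

theorem deriv_comp_mul_sub (f : 𝕜 → 𝕜) (c a : 𝕜) :
    deriv (fun x => f (c * (x - a))) = fun x => c * deriv f (c * (x - a)) := by
  funext x
  exact (deriv_comp_sub_const (fun y => f (c * y)) a x).trans (deriv_comp_mul_left c f _)

theorem deriv_deriv_comp_mul_sub (f : 𝕜 → 𝕜) (c a x : 𝕜) :
    deriv (deriv fun x => f (c * (x - a))) x = c ^ 2 * deriv (deriv f) (c * (x - a)) := by
  rw [deriv_comp_mul_sub, deriv_const_mul_field, deriv_comp_mul_sub, pow_two, mul_assoc]

end CompMulSub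

namespace Real

theorem sinc_eventuallyEq_sin_div {x : ℝ} (hx : x ≠ 0) :
    sinc =ᶠ[𝓝 x] fun t => sin t / t :=
  (eventually_ne_nhds hx).mono fun _ ht => sinc_of_ne_zero ht

theorem hasDerivAt_sinc_of_ne_zero {x : ℝ} (hx : x ≠ 0) :
    HasDerivAt sinc (cos x / x - sin x / x ^ 2) x := by
  have h := (hasDerivAt_sin x).div (hasDerivAt_id' x) hx
  refine (h.congr_of_eventuallyEq (sinc_eventuallyEq_sin_div hx)).congr_deriv ?_
  field_simp

theorem deriv_sinc_eventuallyEq {x : ℝ} (hx : x ≠ 0) :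
    deriv sinc =ᶠ[𝓝 x] fun t => cos t / t - sin t / t ^ 2 :=
  (eventually_ne_nhds hx).mono fun _ ht => (hasDerivAt_sinc_of_ne_zero ht).deriv

theorem deriv_deriv_sinc_of_ne_zero {x : ℝ} (hx : x ≠ 0) :
    deriv (deriv sinc) x = -sin x / x - 2 * cos x / x ^ 2 + 2 * sin x / x ^ 3 := by
  have h : HasDerivAt (fun t => cos t / t - sin t / t ^ 2)
      (-sin x / x - 2 * cos x / x ^ 2 + 2 * sin x / x ^ 3) x :=
    (((hasDerivAt_cos x).div (hasDerivAt_id' x) hx).sub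
      ((hasDerivAt_sin x).div ((hasDerivAt_id' x).pow 2) (pow_ne_zero 2 hx))).congr_deriv <| by
        simp only [Pi.pow_apply]
        field_simp
        ring
  rw [(deriv_sinc_eventuallyEq hx).deriv_eq, h.deriv]

theorem deriv_deriv_sinc_int_mul_pi {k : ℤ} (hk : k ≠ 0) :
    deriv (deriv sinc) (k * π) = 2 * (-1) ^ (k + 1) / (k * π) ^ 2 := by
  have hkπ : (k : ℝ) * π ≠ 0 := mul_ne_zero (Int.cast_ne_zero.mpr hk) pi_ne_zero
  rw [deriv_deriv_sinc_of_ne_zero hkπ, sin_int_mul_pi, cos_int_mul_pi,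
    zpow_add_one₀ (by norm_num : (-1 : ℝ) ≠ 0)]
  ring

end Real

theorem sinc_second_deriv_at_other_node_general (Δx : ℝ) (hΔ : Δx > 0) (m j : ℤ)
    (hjm : j ≠ m) (S : ℝ → ℝ)
    (hS : ∀ x : ℝ, x ≠ m * Δx →
      S x = Real.sin (π * (x - m * Δx) / Δx) / (π * (x - m * Δx) / Δx)) :
    deriv (deriv S) (j * Δx) =
      2 * (-1 : ℝ) ^ (j - m + 1) / (Δx ^ 2 * ((j : ℝ) - m) ^ 2) := by
  have hΔ₀ : Δx ≠ 0 := hΔ.ne'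
  have hnode : (j : ℝ) * Δx ≠ m * Δx :=
    fun h => hjm (Int.cast_injective (mul_right_cancel₀ hΔ₀ h))
  have hS_sinc : S =ᶠ[𝓝 ((j : ℝ) * Δx)] fun x => sinc (π / Δx * (x - m * Δx)) := by
    refine (eventually_ne_nhds hnode).mono fun x hx => ?_
    have hu : π / Δx * (x - m * Δx) ≠ 0 :=
      mul_ne_zero (div_ne_zero pi_ne_zero hΔ₀) (sub_ne_zero.mpr hx)
    dsimp only
    rw [hS x hx, sinc_of_ne_zero hu, div_mul_eq_mul_div]
  have hpoint : π / Δx * ((j : ℝ) * Δx - m * Δx) = ((j - m : ℤ) : ℝ) * π := by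
    push_cast
    field_simp
  rw [hS_sinc.deriv.deriv_eq, deriv_deriv_comp_mul_sub, hpoint,
    deriv_deriv_sinc_int_mul_pi (sub_ne_zero.mpr hjm)]
  push_cast
  field_simp

theorem sinc_second_deriv_at_other_node (Δx : ℝ) (hΔ : Δx > 0) (m j : ℤ)
    (hjm : j ≠ m) (S : ℝ → ℝ)
    (hS : ∀ x : ℝ, x ≠ m * Δx →
      S x = Real.sin (π * (x - m * Δx) / Δx) / (π * (x - m * Δx) / Δx))
    (hSm : S (m * Δx) = 1) :
    deriv (deriv S) (j * Δx) =
      2 * (-1 : ℝ) ^ (j - m + 1) / (Δx ^ 2 * ((j : ℝ) - m) ^ 2) :=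
  sinc_second_deriv_at_other_node_general Δx hΔ m j hjm S hS
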